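/- The element c = (h²+h+4fe)z - 2(fp² - eq² - hpq) belongs to the center Z(s) of the universal enveloping algebra U(s). -/
import Mathlib


namespace Schrodinger

noncomputable section

open scoped TensorProduct

/-- Generators of the Schrödinger algebra. -/
inductive Gen : Type
  | E | H | F | P | Q | Z
  deriving DecidableEq

/-- The free algebra on the generators. -/
abbrev FA : Type := FreeAlgebra ℂ Gen

/-- Inclusion of generators. -/
def ιg (g : Gen) : FA := FreeAlgebra.ι ℂ g

/-- The defining relations of the universal enveloping algebra of the Schrödinger
algebra `s`: `z` is central and `[h,e]=2e`, `[e,f]=h`, `[h,f]=-2f`, `[e,q]=p`,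
`[e,p]=0`, `[h,p]=p`, `[f,p]=q`, `[f,q]=0`, `[h,q]=-q`, `[p,q]=z`. -/
inductive Rel : FA → FA → Prop
  | he : Rel (ιg .H * ιg .E) (ιg .E * ιg .H + 2 * ιg .E)
  | ef : Rel (ιg .E * ιg .F) (ιg .F * ιg .E + ιg .H)
  | hf : Rel (ιg .H * ιg .F) (ιg .F * ιg .H - 2 * ιg .F)
  | eq : Rel (ιg .E * ιg .Q) (ιg .Q * ιg .E + ιg .P)
  | ep : Rel (ιg .E * ιg .P) (ιg .P * ιg .E)
  | hp : Rel (ιg .H * ιg .P) (ιg .P * ιg .H + ιg .P)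
  | fp : Rel (ιg .F * ιg .P) (ιg .P * ιg .F + ιg .Q)
  | fq : Rel (ιg .F * ιg .Q) (ιg .Q * ιg .F)
  | hq : Rel (ιg .H * ιg .Q) (ιg .Q * ιg .H - ιg .Q)
  | pq : Rel (ιg .P * ιg .Q) (ιg .Q * ιg .P + ιg .Z)
  | ze : Rel (ιg .Z * ιg .E) (ιg .E * ιg .Z)
  | zh : Rel (ιg .Z * ιg .H) (ιg .H * ιg .Z)
  | zf : Rel (ιg .Z * ιg .F) (ιg .F * ιg .Z)
  | zp : Rel (ιg .Z * ιg .P) (ιg .P * ιg .Z)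
  | zq : Rel (ιg .Z * ιg .Q) (ιg .Q * ιg .Z)

/-- The universal enveloping algebra `U = U(s)` of the Schrödinger algebra,
presented by generators and relations (via the PBW theorem). -/
abbrev U : Type := RingQuot Rel

/-- The generators of `U`. -/
def gen (g : Gen) : U := RingQuot.mkAlgHom ℂ Rel (ιg g)

def E : U := gen .E
def H : U := gen .H
def F : U := gen .F
def P : U := gen .P
def Q : U := gen .Q
def Z : U := gen .Z

/-- Scalars inside `U`. -/
def sc (a : ℂ) : U := algebraMap ℂ U a

/-- The Casimir element `c = (h² + h + 4fe)z − 2(fp² − eq² − hpq)`. -/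
def cElt : U := (H * H + H + 4 * (F * E)) * Z - 2 * (F * (P * P) - E * (Q * Q) - H * (P * Q))

/-- The left ideal of `U` defining the Verma module `Δ(λ)` for
`λ ∈ 𝔥*` with `λ(h) = hh`, `λ(z) = zz`:  it is generated by `n₊ = span{e,p}`
together with `h - λ(h)` and `z - λ(z)`; then
`Δ(λ) = U ⊗_{U(𝔟)} ℂ_λ ≅ U / U(e, p, h - λ(h), z - λ(z))`. -/
def vermaIdeal (hh zz : ℂ) : Submodule U U :=
  Submodule.span U ({E, P, H - sc hh, Z - sc zz} : Set U)

/-- The Verma module `Δ(λ)` with highest weight `λ`, `λ(h) = hh`, `λ(z) = zz`. -/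
abbrev Verma (hh zz : ℂ) : Type := U ⧸ vermaIdeal hh zz

/-- The canonical highest weight generator `v_λ` of `Δ(λ)`. -/
def hwVec (hh zz : ℂ) : Verma hh zz := Submodule.Quotient.mk 1

/-- The unique maximal submodule `K(λ)` of `Δ(λ)`. -/
def vermaRad (hh zz : ℂ) : Submodule U (Verma hh zz) := sSup {N : Submodule U (Verma hh zz) | N ≠ ⊤}

/-- The simple highest weight module `L(λ) = Δ(λ)/K(λ)`. -/
abbrev SimpleHW (hh zz : ℂ) : Type := Verma hh zz ⧸ vermaRad hh zz

/-- The scalar `ϑ_λ = (λ(h)² + 3λ(h) + 2)·λ(z)` by which the Casimir element `c`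
acts on the Verma module `Δ(λ)`. -/
def vartheta (hh zz : ℂ) : ℂ := (hh ^ 2 + 3 * hh + 2) * zz

end

end Schrodinger

namespace Schrodinger

lemma rHE : H * E = E * H + 2 * E := by
  simpa [E, H, gen, map_mul, map_add, map_ofNat] using RingQuot.mkAlgHom_rel ℂ Rel.he
lemma rEF : E * F = F * E + H := by
  simpa [E, H, F, gen, map_mul, map_add] using RingQuot.mkAlgHom_rel ℂ Rel.ef
lemma rHF : H * F = F * H - 2 * F := by
  simpa [H, F, gen, map_mul, map_sub, map_ofNat] using RingQuot.mkAlgHom_rel ℂ Rel.hf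
lemma rEQ : E * Q = Q * E + P := by
  simpa [E, P, Q, gen, map_mul, map_add] using RingQuot.mkAlgHom_rel ℂ Rel.eq
lemma rEP : E * P = P * E := by
  simpa [E, P, gen, map_mul] using RingQuot.mkAlgHom_rel ℂ Rel.ep
lemma rHP : H * P = P * H + P := by
  simpa [H, P, gen, map_mul, map_add] using RingQuot.mkAlgHom_rel ℂ Rel.hp
lemma rFP : F * P = P * F + Q := by
  simpa [F, P, Q, gen, map_mul, map_add] using RingQuot.mkAlgHom_rel ℂ Rel.fp
lemma rFQ : F * Q = Q * F := by
  simpa [F, Q, gen, map_mul] using RingQuot.mkAlgHom_rel ℂ Rel.fq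
lemma rHQ : H * Q = Q * H - Q := by
  simpa [H, Q, gen, map_mul, map_sub] using RingQuot.mkAlgHom_rel ℂ Rel.hq
lemma rPQ : P * Q = Q * P + Z := by
  simpa [P, Q, Z, gen, map_mul, map_add] using RingQuot.mkAlgHom_rel ℂ Rel.pq
lemma rZE : Z * E = E * Z := by
  simpa [Z, E, gen, map_mul] using RingQuot.mkAlgHom_rel ℂ Rel.ze
lemma rZH : Z * H = H * Z := by
  simpa [Z, H, gen, map_mul] using RingQuot.mkAlgHom_rel ℂ Rel.zh
lemma rZF : Z * F = F * Z := by
  simpa [Z, F, gen, map_mul] using RingQuot.mkAlgHom_rel ℂ Rel.zf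
lemma rZP : Z * P = P * Z := by
  simpa [Z, P, gen, map_mul] using RingQuot.mkAlgHom_rel ℂ Rel.zp
lemma rZQ : Z * Q = Q * Z := by
  simpa [Z, Q, gen, map_mul] using RingQuot.mkAlgHom_rel ℂ Rel.zq

lemma rHE' (x : U) : H * (E * x) = E * (H * x) + 2 * (E * x) := by
  rw [← mul_assoc, rHE]; noncomm_ring
lemma rEF' (x : U) : E * (F * x) = F * (E * x) + H * x := by
  rw [← mul_assoc, rEF]; noncomm_ring
lemma rHF' (x : U) : H * (F * x) = F * (H * x) - 2 * (F * x) := by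
  rw [← mul_assoc, rHF, sub_mul, mul_assoc, mul_assoc]
lemma rEQ' (x : U) : E * (Q * x) = Q * (E * x) + P * x := by
  rw [← mul_assoc, rEQ]; noncomm_ring
lemma rEP' (x : U) : E * (P * x) = P * (E * x) := by
  rw [← mul_assoc, rEP]; noncomm_ring
lemma rHP' (x : U) : H * (P * x) = P * (H * x) + P * x := by
  rw [← mul_assoc, rHP]; noncomm_ring
lemma rFP' (x : U) : F * (P * x) = P * (F * x) + Q * x := by
  rw [← mul_assoc, rFP]; noncomm_ring
lemma rFQ' (x : U) : F * (Q * x) = Q * (F * x) := by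
  rw [← mul_assoc, rFQ]; noncomm_ring
lemma rHQ' (x : U) : H * (Q * x) = Q * (H * x) - Q * x := by
  rw [← mul_assoc, rHQ, sub_mul, mul_assoc]
lemma rPQ' (x : U) : P * (Q * x) = Q * (P * x) + Z * x := by
  rw [← mul_assoc, rPQ]; noncomm_ring
lemma rZE' (x : U) : Z * (E * x) = E * (Z * x) := by rw [← mul_assoc, rZE]; noncomm_ring
lemma rZH' (x : U) : Z * (H * x) = H * (Z * x) := by rw [← mul_assoc, rZH]; noncomm_ring
lemma rZF' (x : U) : Z * (F * x) = F * (Z * x) := by rw [← mul_assoc, rZF]; noncomm_ring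
lemma rZP' (x : U) : Z * (P * x) = P * (Z * x) := by rw [← mul_assoc, rZP]; noncomm_ring
lemma rZQ' (x : U) : Z * (Q * x) = Q * (Z * x) := by rw [← mul_assoc, rZQ]; noncomm_ring

lemma mulNum (a x : U) (n : ℕ) [n.AtLeastTwo] :
    a * (OfNat.ofNat n * x) = OfNat.ofNat n * (a * x) := by
  rw [← mul_assoc, (Commute.ofNat_right a n).eq, mul_assoc]

lemma commE : cElt * E = E * cElt := by
  simp only [cElt, mul_sub, sub_mul, mul_add, add_mul, mul_assoc,
    mulNum E, mulNum H, mulNum F, mulNum P, mulNum Q, mulNum Z,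
    rHE, rHE', rEF, rEF', rHF, rHF', rEQ, rEQ', rEP, rEP', rHP, rHP',
    rFP, rFP', rFQ, rFQ', rHQ, rHQ', rPQ, rPQ',
    rZE, rZE', rZH, rZH', rZF, rZF', rZP, rZP', rZQ, rZQ']
  noncomm_ring

lemma commH : cElt * H = H * cElt := by
  simp only [cElt, mul_sub, sub_mul, mul_add, add_mul, mul_assoc,
    mulNum E, mulNum H, mulNum F, mulNum P, mulNum Q, mulNum Z,
    rHE, rHE', rEF, rEF', rHF, rHF', rEQ, rEQ', rEP, rEP', rHP, rHP',
    rFP, rFP', rFQ, rFQ', rHQ, rHQ', rPQ, rPQ',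
    rZE, rZE', rZH, rZH', rZF, rZF', rZP, rZP', rZQ, rZQ']
  noncomm_ring

lemma commF : cElt * F = F * cElt := by
  simp only [cElt, mul_sub, sub_mul, mul_add, add_mul, mul_assoc,
    mulNum E, mulNum H, mulNum F, mulNum P, mulNum Q, mulNum Z,
    rHE, rHE', rEF, rEF', rHF, rHF', rEQ, rEQ', rEP, rEP', rHP, rHP',
    rFP, rFP', rFQ, rFQ', rHQ, rHQ', rPQ, rPQ',
    rZE, rZE', rZH, rZH', rZF, rZF', rZP, rZP', rZQ, rZQ']
  noncomm_ring

lemma commP : cElt * P = P * cElt := by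
  simp only [cElt, mul_sub, sub_mul, mul_add, add_mul, mul_assoc,
    mulNum E, mulNum H, mulNum F, mulNum P, mulNum Q, mulNum Z,
    rHE, rHE', rEF, rEF', rHF, rHF', rEQ, rEQ', rEP, rEP', rHP, rHP',
    rFP, rFP', rFQ, rFQ', rHQ, rHQ', rPQ, rPQ',
    rZE, rZE', rZH, rZH', rZF, rZF', rZP, rZP', rZQ, rZQ']
  noncomm_ring

lemma commQ : cElt * Q = Q * cElt := by
  simp only [cElt, mul_sub, sub_mul, mul_add, add_mul, mul_assoc,
    mulNum E, mulNum H, mulNum F, mulNum P, mulNum Q, mulNum Z,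
    rHE, rHE', rEF, rEF', rHF, rHF', rEQ, rEQ', rEP, rEP', rHP, rHP',
    rFP, rFP', rFQ, rFQ', rHQ, rHQ', rPQ, rPQ',
    rZE, rZE', rZH, rZH', rZF, rZF', rZP, rZP', rZQ, rZQ']
  noncomm_ring

lemma commZ : cElt * Z = Z * cElt := by
  simp only [cElt, mul_sub, sub_mul, mul_add, add_mul, mul_assoc,
    mulNum E, mulNum H, mulNum F, mulNum P, mulNum Q, mulNum Z,
    rHE, rHE', rEF, rEF', rHF, rHF', rEQ, rEQ', rEP, rEP', rHP, rHP',
    rFP, rFP', rFQ, rFQ', rHQ, rHQ', rPQ, rPQ',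
    rZE, rZE', rZH, rZH', rZF, rZF', rZP, rZP', rZQ, rZQ']
  

/-- Lemma 1 of the paper: the Casimir element
`c = (h² + h + 4fe)z − 2(fp² − eq² − hpq)` lies in the center `Z(s)` of the
universal enveloping algebra `U(s)` of the Schrödinger algebra. -/
theorem casimir_mem_center : cElt ∈ Subalgebra.center ℂ U := by
  rw [Subalgebra.mem_center_iff]
  intro b
  obtain ⟨y, rfl⟩ := RingQuot.mkAlgHom_surjective ℂ Rel b
  induction y using FreeAlgebra.induction with
  | grade0 r =>
      rw [AlgHom.commutes]
      exact Algebra.commutes r cElt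
  | grade1 g =>
      cases g
      · exact commE.symm
      · exact commH.symm
      · exact commF.symm
      · exact commP.symm
      · exact commQ.symm
      · exact commZ.symm
  | mul a b ha hb =>
      rw [map_mul, mul_assoc, hb, ← mul_assoc, ha, mul_assoc]
  | add a b ha hb =>
      rw [map_add, add_mul, mul_add, ha, hb]


end Schrodinger
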